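/- arXiv:2005.05464 — 2 statements merged into one kernel-verified Lean document; each statement's English description precedes it below -/
import Mathlib

section
/- Let W be a symmetric nonnegative n×n matrix with zero diagonal and positive row sums, D_w its diagonal row-sum matrix, and let λ_min and λ_max be the smallest and largest eigenvalues of D_w^{−1/2} W D_w^{−1/2}. Then for every ρ with λ_min^{−1} < ρ < λ_max^{−1} (interpreting the bound as −∞ or +∞ when the eigenvalue is 0), the matrix D_w − ρW is symmetric positive definite. -/
open Finset Matrix

lemma posDef_mul_mul_conjTranspose_of_isUnit {n : Type*} [Fintype n] [DecidableEq n]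
    {A B : Matrix n n ℝ} (hA : A.PosDef) (hB : IsUnit B) : (B * A * Bᴴ).PosDef := by
  refine Matrix.PosDef.of_dotProduct_mulVec_pos (Matrix.isHermitian_mul_mul_conjTranspose _ hA.1) fun x hx => ?_
  have hBH : IsUnit Bᴴ := by
    rw [Matrix.isUnit_iff_isUnit_det, Matrix.det_conjTranspose]
    exact ((Matrix.isUnit_iff_isUnit_det _).mp hB).star
  have h0 : Bᴴ *ᵥ x ≠ 0 := by
    intro h
    apply hx
    have hinj := Matrix.mulVec_injective_iff_isUnit.mpr hBH
    have : Bᴴ *ᵥ x = Bᴴ *ᵥ 0 := by simpa using h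
    exact hinj this
  simpa only [star_mulVec, Matrix.dotProduct_mulVec, vecMul_vecMul,
    conjTranspose_conjTranspose] using hA.dotProduct_mulVec_pos h0

/-- Let `W` be a symmetric nonnegative matrix with zero diagonal and positive
row sums, `D_w` its diagonal row-sum matrix, and `λ_min`/`λ_max` the smallest/largest
eigenvalues of `D_w^{−1/2} W D_w^{−1/2}`.  For every `ρ` with `λ_min⁻¹ < ρ < λ_max⁻¹`
(the bound being `−∞`, resp. `+∞`, i.e. no constraint, when the eigenvalue is `0`),
the matrix `D_w − ρ W` is symmetric positive definite. -/
theorem stmt_3 (n : ℕ) (W : Matrix (Fin n) (Fin n) ℝ)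
    (hsymm : W.IsSymm)
    (hnonneg : ∀ i j, 0 ≤ W i j)
    (hdiag : ∀ i, W i i = 0)
    (hrow : ∀ i, 0 < ∑ j, W i j)
    (hM : (Matrix.diagonal (fun i => (Real.sqrt (∑ j, W i j))⁻¹) * W *
            Matrix.diagonal (fun i => (Real.sqrt (∑ j, W i j))⁻¹)).IsHermitian)
    (ρ : ℝ)
    (hlo : (⨅ i, hM.eigenvalues i) = 0 ∨ (⨅ i, hM.eigenvalues i)⁻¹ < ρ)
    (hhi : (⨆ i, hM.eigenvalues i) = 0 ∨ ρ < (⨆ i, hM.eigenvalues i)⁻¹) :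
    (Matrix.diagonal (fun i => ∑ j, W i j) - ρ • W).IsSymm ∧
    (Matrix.diagonal (fun i => ∑ j, W i j) - ρ • W).PosDef := by
  set s : Fin n → ℝ := fun i => ∑ j, W i j with hs
  have hsqrt_pos : ∀ i, 0 < Real.sqrt (s i) := fun i => Real.sqrt_pos.mpr (hrow i)
  -- Step A: every eigenvalue λ satisfies 1 - ρ * λ > 0
  have hlam : ∀ i, 0 < 1 - ρ * hM.eigenvalues i := by
    intro i
    set l := hM.eigenvalues i with hl
    rcases lt_trichotomy l 0 with hneg | hz | hpos
    · -- l < 0 : use lower bound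
      have hinf_le : (⨅ j, hM.eigenvalues j) ≤ l :=
        ciInf_le (Finite.bddBelow_range _) i
      have hinf_neg : (⨅ j, hM.eigenvalues j) < 0 := lt_of_le_of_lt hinf_le hneg
      rcases hlo with h0 | hρ
      · exact absurd h0 (ne_of_lt hinf_neg)
      · have h1 : l⁻¹ ≤ (⨅ j, hM.eigenvalues j)⁻¹ :=
          (inv_le_inv_of_neg hneg hinf_neg).mpr hinf_le
        have h2 : l⁻¹ < ρ := lt_of_le_of_lt h1 hρ
        have : ρ * l < 1 := by
          have h3 := mul_lt_mul_of_neg_right h2 hneg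
          rwa [inv_mul_cancel₀ hneg.ne] at h3
        linarith
    · simp [hz]
    · -- l > 0 : use upper bound
      have hle : l ≤ (⨆ j, hM.eigenvalues j) := by
        rw [hl]
        exact le_ciSup (Finite.bddAbove_range hM.eigenvalues) i
      have hsup_pos : 0 < (⨆ j, hM.eigenvalues j) := lt_of_lt_of_le hpos hle
      rcases hhi with h0 | hρ
      · exact absurd h0 (ne_of_gt hsup_pos)
      · have h1 : (⨆ j, hM.eigenvalues j)⁻¹ ≤ l⁻¹ :=
          inv_anti₀ hpos hle
        have h2 : ρ < l⁻¹ := lt_of_lt_of_le hρ h1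
        have : ρ * l < 1 := by
          have h3 := mul_lt_mul_of_pos_right h2 hpos
          rwa [inv_mul_cancel₀ hpos.ne'] at h3
        linarith
  -- Step B: 1 - ρ • M is positive definite
  set M : Matrix (Fin n) (Fin n) ℝ :=
    Matrix.diagonal (fun i => (Real.sqrt (s i))⁻¹) * W *
      Matrix.diagonal (fun i => (Real.sqrt (s i))⁻¹) with hMdef
  set U : Matrix (Fin n) (Fin n) ℝ := (hM.eigenvectorUnitary : Matrix (Fin n) (Fin n) ℝ)
    with hU
  have hUU : U * star U = 1 := (Matrix.mem_unitaryGroup_iff).mp hM.eigenvectorUnitary.2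
  have hspec : M = U * Matrix.diagonal (hM.eigenvalues) * star U := by
    have := hM.spectral_theorem
    simpa [Function.comp] using this
  have hdecomp : (1 : Matrix (Fin n) (Fin n) ℝ) - ρ • M =
      U * Matrix.diagonal (fun i => 1 - ρ * hM.eigenvalues i) * star U := by
    have hd : Matrix.diagonal (fun i => 1 - ρ * hM.eigenvalues i) =
        1 - ρ • Matrix.diagonal (hM.eigenvalues) := by
      ext i j
      by_cases h : i = j <;> simp [Matrix.diagonal, h, Matrix.one_apply]
    rw [hd, Matrix.mul_sub, Matrix.sub_mul, Matrix.mul_one, hUU,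
      Matrix.mul_smul, Matrix.smul_mul, ← hspec]
  have hpos1 : ((1 : Matrix (Fin n) (Fin n) ℝ) - ρ • M).PosDef := by
    rw [hdecomp]
    exact posDef_mul_mul_conjTranspose_of_isUnit
      (Matrix.posDef_diagonal_iff.mpr hlam)
      ((Unitary.toUnits hM.eigenvectorUnitary).isUnit)
  -- Step C: congruence by S = diagonal (sqrt s)
  set S : Matrix (Fin n) (Fin n) ℝ := Matrix.diagonal (fun i => Real.sqrt (s i)) with hSdef
  have hSunit : IsUnit S := by
    rw [hSdef, Matrix.isUnit_iff_isUnit_det, Matrix.det_diagonal]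
    exact IsUnit.of_mul_eq_one (∏ i, (Real.sqrt (s i))⁻¹)
      (by rw [← Finset.prod_mul_distrib]; simp [mul_inv_cancel₀ (hsqrt_pos _).ne'])
  have hSH : Sᴴ = S := by
    rw [hSdef, Matrix.diagonal_conjTranspose]
    simp
  have hSMS : S * M * S = W := by
    rw [hMdef, hSdef]
    rw [show Matrix.diagonal (fun i => (Real.sqrt (s i))⁻¹) * W *
          Matrix.diagonal (fun i => (Real.sqrt (s i))⁻¹)
        = Matrix.diagonal (fun i => (Real.sqrt (s i))⁻¹) *
          (W * Matrix.diagonal (fun i => (Real.sqrt (s i))⁻¹)) from Matrix.mul_assoc _ _ _]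
    rw [← Matrix.mul_assoc, ← Matrix.mul_assoc, Matrix.diagonal_mul_diagonal]
    have h1 : (fun i => Real.sqrt (s i) * (Real.sqrt (s i))⁻¹) = fun _ => (1 : ℝ) := by
      funext i; exact mul_inv_cancel₀ (hsqrt_pos i).ne'
    rw [h1, Matrix.diagonal_one, Matrix.one_mul, Matrix.mul_assoc,
      Matrix.diagonal_mul_diagonal]
    have h2 : (fun i => (Real.sqrt (s i))⁻¹ * Real.sqrt (s i)) = fun _ => (1 : ℝ) := by
      funext i; exact inv_mul_cancel₀ (hsqrt_pos i).ne'
    rw [h2, Matrix.diagonal_one, Matrix.mul_one]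
  have hSS : S * S = Matrix.diagonal s := by
    rw [hSdef, Matrix.diagonal_mul_diagonal]
    have : (fun i => Real.sqrt (s i) * Real.sqrt (s i)) = s :=
      funext fun i => Real.mul_self_sqrt (hrow i).le
    rw [this]
  have hfinal : Matrix.diagonal s - ρ • W = S * ((1 : Matrix (Fin n) (Fin n) ℝ) - ρ • M) * Sᴴ := by
    rw [hSH, Matrix.mul_sub, Matrix.sub_mul, Matrix.mul_one, hSS,
      Matrix.mul_smul, Matrix.smul_mul, hSMS]
  constructor
  · unfold Matrix.IsSymm
    rw [Matrix.transpose_sub, Matrix.transpose_smul, Matrix.diagonal_transpose, hsymm]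
  · rw [show (Matrix.diagonal (fun i => ∑ j, W i j) : Matrix (Fin n) (Fin n) ℝ)
        = Matrix.diagonal s from rfl, hfinal]
    exact posDef_mul_mul_conjTranspose_of_isUnit hpos1 hSunit
end

section
/- Brook's Lemma: Let π be a positive joint density on ℝⁿ. Then for any two points x = (x₁,...,xₙ) and y = (y₁,...,yₙ), π(x)/π(y) = Π_{i=1}^{n} π(x_i | x₁,...,x_{i−1}, y_{i+1},...,yₙ) / π(y_i | x₁,...,x_{i−1}, y_{i+1},...,yₙ), so the joint density is determined up to a constant by its full conditional distributions. -/
open MeasureTheory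

/-- The full conditional density of coordinate `i` at the point `v`:
`π(v_i | v_{−i}) = π(v) / ∫ π(v with coordinate i replaced by t) dt`. -/
noncomputable def fullCond {n : ℕ} (π : (Fin n → ℝ) → ℝ) (i : Fin n) (v : Fin n → ℝ) : ℝ :=
  π v / ∫ t : ℝ, π (Function.update v i t)

/-- The hybrid point with the first `k` coordinates from `x` and the rest from `y`. -/
def hyb {n : ℕ} (x y : Fin n → ℝ) (k : ℕ) : Fin n → ℝ :=
  fun j => if (j : ℕ) < k then x j else y j

private lemma telescope (g : ℕ → ℝ) (hg : ∀ k, g k ≠ 0) (n : ℕ) :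
    ∏ i ∈ Finset.range n, g (i + 1) / g i = g n / g 0 := by
  induction n with
  | zero => simp [div_self (hg 0)]
  | succ n ih =>
      rw [Finset.prod_range_succ, ih, div_mul_div_comm, mul_comm,
        mul_div_mul_right _ _ (hg n)]

/-- Brook's Lemma: for a positive joint density `π` on `ℝⁿ` (with all
one-dimensional sections integrable, so that full conditionals are well defined),
`π(x)/π(y) = Π_i π(x_i | x₁,…,x_{i−1}, y_{i+1},…,yₙ) / π(y_i | x₁,…,x_{i−1}, y_{i+1},…,yₙ)`;
hence the joint density is determined up to a constant by its full conditionals. -/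
theorem stmt_10 (n : ℕ) (π : (Fin n → ℝ) → ℝ)
    (hpos : ∀ v, 0 < π v)
    (hint : ∀ (i : Fin n) (v : Fin n → ℝ),
      Integrable (fun t : ℝ => π (Function.update v i t)))
    (x y : Fin n → ℝ) :
    π x / π y =
      ∏ i : Fin n,
        fullCond π i (hyb x y ((i : ℕ) + 1)) / fullCond π i (hyb x y (i : ℕ)) := by
  have hIpos : ∀ (i : Fin n) (v : Fin n → ℝ),
      0 < ∫ t : ℝ, π (Function.update v i t) := by
    intro i v
    rw [integral_pos_iff_support_of_nonneg (fun t => (hpos _).le) (hint i v)]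
    have : Function.support (fun t : ℝ => π (Function.update v i t)) = Set.univ := by
      ext t; simp [(hpos _).ne']
    simp [this]
  have hupd : ∀ i : Fin n, ∀ t : ℝ,
      Function.update (hyb x y ((i : ℕ) + 1)) i t = Function.update (hyb x y (i : ℕ)) i t := by
    intro i t
    funext j
    rcases eq_or_ne j i with rfl | hj
    · simp
    · have hji : (j : ℕ) ≠ (i : ℕ) := fun h => hj (Fin.ext h)
      simp only [Function.update_of_ne hj, hyb]
      have : (j : ℕ) < (i : ℕ) + 1 ↔ (j : ℕ) < (i : ℕ) := by omega
      simp [this]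
  have hterm : ∀ i : Fin n,
      fullCond π i (hyb x y ((i : ℕ) + 1)) / fullCond π i (hyb x y (i : ℕ)) =
      π (hyb x y ((i : ℕ) + 1)) / π (hyb x y (i : ℕ)) := by
    intro i
    unfold fullCond
    have h1 : (fun t : ℝ => π (Function.update (hyb x y ((i : ℕ) + 1)) i t)) =
        fun t : ℝ => π (Function.update (hyb x y (i : ℕ)) i t) := by
      funext t; rw [hupd i t]
    rw [h1]
    set I := ∫ t : ℝ, π (Function.update (hyb x y (i : ℕ)) i t) with hI
    have hI0 : I ≠ 0 := (hIpos i _).ne'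
    field_simp
  rw [Finset.prod_congr rfl (fun i _ => hterm i), Fin.prod_univ_eq_prod_range
    (fun k => π (hyb x y (k + 1)) / π (hyb x y k)) n,
    telescope (fun k => π (hyb x y k)) (fun k => (hpos _).ne') n]
  have hx : hyb x y n = x := by funext j; simp [hyb, j.isLt]
  have hy : hyb x y 0 = y := by funext j; simp [hyb]
  rw [hx, hy]
end
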